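/- arXiv:alg-geom/9703004 — 8 statements merged into one kernel-verified Lean document; each statement's English description precedes it below -/
import Mathlib

section
/- Let B, D ∈ GL(n, ℂ) and suppose that for every nonzero proper subspace W of ℂⁿ invariant under both B and D, the determinant of the restriction of the commutator [B,D] = BDB⁻¹D⁻¹ to W is not equal to 1. Then any matrix K ∈ GL(n, ℂ) commuting with both B and D is a scalar matrix. -/
lemma aux_inj (n : ℕ) (M : Matrix (Fin n) (Fin n) ℂ) (hM : IsUnit M) :
    Function.Injective (Matrix.toLin' M) := by
  have h1 : M⁻¹ * M = 1 := Matrix.nonsing_inv_mul M ((Matrix.isUnit_iff_isUnit_det M).mp hM)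
  intro x y hxy
  have := congrArg (Matrix.toLin' M⁻¹) hxy
  simpa [← Matrix.toLin'_mul_apply, h1] using this

lemma aux_inv_inv (n : ℕ) (M : Matrix (Fin n) (Fin n) ℂ) (hM : IsUnit M)
    (W : Submodule ℂ (Fin n → ℂ)) (hW : ∀ x ∈ W, Matrix.toLin' M x ∈ W) :
    ∀ x ∈ W, Matrix.toLin' M⁻¹ x ∈ W := by
  have h1 : M⁻¹ * M = 1 := Matrix.nonsing_inv_mul M ((Matrix.isUnit_iff_isUnit_det M).mp hM)
  set g : W →ₗ[ℂ] W := (Matrix.toLin' M).restrict hW with hg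
  have hginj : Function.Injective g := fun a b hab => by
    apply Subtype.ext
    exact aux_inj n M hM (by simpa [hg, LinearMap.restrict_apply, Subtype.ext_iff] using hab)
  have hgsurj : Function.Surjective g :=
    LinearMap.injective_iff_surjective.mp hginj
  intro x hx
  obtain ⟨y, hy⟩ := hgsurj ⟨x, hx⟩
  have hyx : Matrix.toLin' M (y : Fin n → ℂ) = x := by
    simpa [hg, LinearMap.restrict_apply, Subtype.ext_iff] using hy
  have : Matrix.toLin' M⁻¹ x = (y : Fin n → ℂ) := by
    rw [← hyx, ← Matrix.toLin'_mul_apply, h1]; simp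
  rw [this]; exact y.2

lemma aux_restrict_mul (n : ℕ) (M N : Matrix (Fin n) (Fin n) ℂ)
    (W : Submodule ℂ (Fin n → ℂ)) (hM : ∀ x ∈ W, Matrix.toLin' M x ∈ W)
    (hN : ∀ x ∈ W, Matrix.toLin' N x ∈ W)
    (hMN : ∀ x ∈ W, Matrix.toLin' (M * N) x ∈ W) :
    (Matrix.toLin' (M * N)).restrict hMN =
      ((Matrix.toLin' M).restrict hM).comp ((Matrix.toLin' N).restrict hN) := by
  ext x
  simp [LinearMap.restrict_apply, Matrix.toLin'_mul_apply]

lemma aux_det_restrict (n : ℕ) (M : Matrix (Fin n) (Fin n) ℂ) (hM : IsUnit M)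
    (W : Submodule ℂ (Fin n → ℂ)) (hW : ∀ x ∈ W, Matrix.toLin' M x ∈ W) :
    LinearMap.det ((Matrix.toLin' M).restrict hW) *
      LinearMap.det ((Matrix.toLin' M⁻¹).restrict (aux_inv_inv n M hM W hW)) = 1 := by
  have h1 : M * M⁻¹ = 1 := Matrix.mul_nonsing_inv M ((Matrix.isUnit_iff_isUnit_det M).mp hM)
  have hprod : ∀ x ∈ W, Matrix.toLin' (M * M⁻¹) x ∈ W := by
    intro x hx; rw [h1]; simpa using hx
  rw [← LinearMap.det_comp, ← aux_restrict_mul n M M⁻¹ W hW (aux_inv_inv n M hM W hW) hprod]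
  have : (Matrix.toLin' (M * M⁻¹)).restrict hprod = LinearMap.id := by
    ext x; simp [LinearMap.restrict_apply, h1]
  rw [this, LinearMap.det_id]

/-- If `B, D ∈ GL(n, ℂ)` are such that for every nonzero proper subspace `W` invariant under
both `B` and `D`, the determinant of the restriction of the commutator `BDB⁻¹D⁻¹` to `W` is
not `1`, then any invertible matrix commuting with both `B` and `D` is scalar. -/
theorem stmt_0 (n : ℕ) (B D : Matrix (Fin n) (Fin n) ℂ) (hB : IsUnit B) (hD : IsUnit D)
    (hP : ∀ W : Submodule ℂ (Fin n → ℂ), W ≠ ⊥ → W ≠ ⊤ →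
      (∀ x ∈ W, Matrix.toLin' B x ∈ W) → (∀ x ∈ W, Matrix.toLin' D x ∈ W) →
      ∀ hC : ∀ x ∈ W, Matrix.toLin' (B * D * B⁻¹ * D⁻¹) x ∈ W,
        LinearMap.det ((Matrix.toLin' (B * D * B⁻¹ * D⁻¹)).restrict hC) ≠ 1)
    (K : Matrix (Fin n) (Fin n) ℂ) (hK : IsUnit K)
    (hKB : K * B = B * K) (hKD : K * D = D * K) :
    ∃ c : ℂ, K = c • (1 : Matrix (Fin n) (Fin n) ℂ) := by
  rcases Nat.eq_zero_or_pos n with h0 | hn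
  · subst h0; exact ⟨0, Subsingleton.elim _ _⟩
  haveI : Nonempty (Fin n) := Fin.pos_iff_nonempty.mp hn
  haveI : Nontrivial (Fin n → ℂ) := inferInstance
  set f : Module.End ℂ (Fin n → ℂ) := Matrix.toLin' K with hf
  obtain ⟨c, hc⟩ := Module.End.exists_eigenvalue f
  set W : Submodule ℂ (Fin n → ℂ) := f.eigenspace c with hW
  have hWbot : W ≠ ⊥ := Module.End.hasEigenvalue_iff.mp hc
  -- invariance under a matrix commuting with K
  have hinv : ∀ M : Matrix (Fin n) (Fin n) ℂ, K * M = M * K →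
      ∀ x ∈ W, Matrix.toLin' M x ∈ W := by
    intro M hKM x hx
    rw [hW, Module.End.mem_eigenspace_iff] at hx ⊢
    rw [hf, ← Matrix.toLin'_mul_apply, hKM, Matrix.toLin'_mul_apply, hx, map_smul]
  by_cases htop : W = ⊤
  · refine ⟨c, Matrix.toLin'.injective ?_⟩
    apply LinearMap.ext
    intro x
    have hx : x ∈ W := htop ▸ Submodule.mem_top
    rw [hW, Module.End.mem_eigenspace_iff] at hx
    simp [hf] at hx
    simp [hx, Matrix.toLin'_one]
  · exfalso
    have hWB : ∀ x ∈ W, Matrix.toLin' B x ∈ W := hinv B hKB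
    have hWD : ∀ x ∈ W, Matrix.toLin' D x ∈ W := hinv D hKD
    have hWBi := aux_inv_inv n B hB W hWB
    have hWDi := aux_inv_inv n D hD W hWD
    have hWBD : ∀ x ∈ W, Matrix.toLin' (B * D) x ∈ W := by
      intro x hx; rw [Matrix.toLin'_mul_apply]; exact hWB _ (hWD _ hx)
    have hWBDBi : ∀ x ∈ W, Matrix.toLin' (B * D * B⁻¹) x ∈ W := by
      intro x hx; rw [Matrix.toLin'_mul_apply]; exact hWBD _ (hWBi _ hx)
    have hC : ∀ x ∈ W, Matrix.toLin' (B * D * B⁻¹ * D⁻¹) x ∈ W := by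
      intro x hx; rw [Matrix.toLin'_mul_apply]; exact hWBDBi _ (hWDi _ hx)
    apply hP W hWbot htop hWB hWD hC
    rw [aux_restrict_mul n (B * D * B⁻¹) D⁻¹ W hWBDBi hWDi hC,
      aux_restrict_mul n (B * D) B⁻¹ W hWBD hWBi hWBDBi,
      aux_restrict_mul n B D W hWB hWD hWBD]
    rw [LinearMap.det_comp, LinearMap.det_comp, LinearMap.det_comp]
    have h1 := aux_det_restrict n B hB W hWB
    have h2 := aux_det_restrict n D hD W hWD
    linear_combination (LinearMap.det ((Matrix.toLin' D).restrict hWD) *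
      LinearMap.det ((Matrix.toLin' D⁻¹).restrict hWDi)) * h1 + h2
end

section
/- Every diagonal matrix in SL(n, ℂ) is the commutator BDB⁻¹D⁻¹ of two matrices B, D ∈ GL(n, ℂ). -/
/-!
Conjugating a diagonal matrix `diagonal d` by the permutation matrix of `σ` gives
`diagonal (d ∘ σ)`, so their commutator is `diagonal fun i => d (σ i) / d i`. For `σ` the cyclic
shift of `Fin m` and `d i = ∏ j < i, a j`, this quotient is `a i`: below the last index because
`d (i + 1) = d i * a i`, and at the wrap-around because `d 0 = 1 = ∏ a`.
-/

open Finset Matrix Equiv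

theorem Fin.prod_Iio_finRotate {M : Type*} [CommMonoid M] {n : ℕ} (a : Fin n → M)
    (ha : ∏ i, a i = 1) (i : Fin n) :
    ∏ j ∈ Iio (finRotate n i), a j = (∏ j ∈ Iio i, a j) * a i := by
  rw [prod_Iio_mul_eq_prod_Iic]
  cases n with
  | zero => exact i.elim0
  | succ m =>
    induction i using Fin.lastCases with
    | last =>
      rw [finRotate_last, ← bot_eq_zero, Iio_bot, ← Fin.top_eq_last, Iic_top, prod_empty, ha]
    | cast j =>
      have hIio : Iio j.succ = Iic j.castSucc := by
        ext k
        simp only [mem_Iio, mem_Iic, Fin.le_castSucc_iff]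
      rw [finRotate_apply, Fin.coeSucc_eq_succ, hIio]

namespace Matrix

variable {n : Type*} [Fintype n] [DecidableEq n]

theorem permMatrix_mul_permMatrix_inv {R : Type*} [NonAssocSemiring R] (σ : Perm n) :
    σ.permMatrix R * σ⁻¹.permMatrix R = 1 := by
  rw [← permMatrix_mul, inv_mul_cancel, permMatrix_one]

theorem permMatrix_mul_diagonal_mul_permMatrix_inv {R : Type*} [NonAssocSemiring R]
    (σ : Perm n) (d : n → R) :
    σ.permMatrix R * diagonal d * σ⁻¹.permMatrix R = diagonal (d ∘ σ) := by
  rw [PEquiv.toMatrix_toPEquiv_mul, PEquiv.mul_toMatrix_toPEquiv, submatrix_submatrix]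
  exact submatrix_diagonal_equiv d σ

theorem inv_diagonal_of_ne_zero {K : Type*} [Field K] {d : n → K} (hd : ∀ i, d i ≠ 0) :
    (diagonal d)⁻¹ = diagonal fun i => (d i)⁻¹ := by
  refine inv_eq_right_inv ?_
  rw [diagonal_mul_diagonal, ← diagonal_one]
  exact congrArg diagonal (funext fun i => mul_inv_cancel₀ (hd i))

theorem permMatrix_diagonal_commutator {K : Type*} [Field K] (σ : Perm n) {d : n → K}
    (hd : ∀ i, d i ≠ 0) :
    σ.permMatrix K * diagonal d * (σ.permMatrix K)⁻¹ * (diagonal d)⁻¹ =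
      diagonal fun i => d (σ i) / d i := by
  rw [inv_eq_right_inv (permMatrix_mul_permMatrix_inv σ),
    permMatrix_mul_diagonal_mul_permMatrix_inv, inv_diagonal_of_ne_zero hd, diagonal_mul_diagonal]
  simp only [Function.comp_apply, div_eq_mul_inv]

theorem exists_diagonal_eq_commutator {K : Type*} [Field K] {m : ℕ} (a : Fin m → K)
    (ha : ∏ i, a i = 1) :
    ∃ B D : Matrix (Fin m) (Fin m) K, IsUnit B ∧ IsUnit D ∧ diagonal a = B * D * B⁻¹ * D⁻¹ := by
  set d : Fin m → K := fun i => ∏ j ∈ Iio i, a j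
  have hshift : ∀ i, d (finRotate m i) = d i * a i := Fin.prod_Iio_finRotate a ha
  have hd : ∀ i, d i ≠ 0 := fun i =>
    prod_ne_zero_iff.mpr fun j _ => prod_ne_zero_iff.mp (ha ▸ one_ne_zero) j (mem_univ j)
  refine ⟨(finRotate m).permMatrix K, diagonal d,
    IsUnit.of_mul_eq_one _ (permMatrix_mul_permMatrix_inv _),
    isUnit_diagonal.mpr (Pi.isUnit_iff.mpr fun i => (hd i).isUnit), ?_⟩
  rw [permMatrix_diagonal_commutator _ hd]
  exact congrArg diagonal (funext fun i => by rw [hshift, mul_div_cancel_left₀ _ (hd i)])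

end Matrix

/-- Every diagonal matrix in `SL(n, ℂ)` is the commutator `BDB⁻¹D⁻¹` of two invertible
matrices `B, D ∈ GL(n, ℂ)`. -/
theorem stmt_4 (n : ℕ) (A : Matrix (Fin n) (Fin n) ℂ) (hA : A.IsDiag) (hdet : A.det = 1) :
    ∃ B D : Matrix (Fin n) (Fin n) ℂ, IsUnit B ∧ IsUnit D ∧ A = B * D * B⁻¹ * D⁻¹ := by
  rw [← hA.diagonal_diag] at hdet ⊢
  rw [det_diagonal] at hdet
  exact exists_diagonal_eq_commutator _ hdet
end

section
/- Every semisimple (diagonalizable) element of SL(n, ℂ) is a commutator [B, D] = BDB⁻¹D⁻¹ with B, D ∈ GL(n, ℂ). -/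
open Matrix Equiv

/-- Every semisimple (diagonalizable) element of `SL(n, ℂ)` is a commutator `BDB⁻¹D⁻¹`
with `B, D ∈ GL(n, ℂ)`. -/
theorem stmt_5 (n : ℕ) (A : Matrix (Fin n) (Fin n) ℂ) (hdet : A.det = 1)
    (hss : ∃ P : Matrix (Fin n) (Fin n) ℂ, IsUnit P ∧ (P * A * P⁻¹).IsDiag) :
    ∃ B D : Matrix (Fin n) (Fin n) ℂ, IsUnit B ∧ IsUnit D ∧ A = B * D * B⁻¹ * D⁻¹ := by
  obtain ⟨P, hP, hdiag⟩ := hss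
  match n, A, P, hdet, hP, hdiag with
  | 0, A, P, hdet, hP, hdiag =>
    exact ⟨1, 1, isUnit_one, isUnit_one, Subsingleton.elim _ _⟩
  | m + 1, A, P, hdet, hP, hdiag =>
    set d : Fin (m+1) → ℂ := fun i => (P * A * P⁻¹) i i with hd
    have hΔ : P * A * P⁻¹ = diagonal d := (hdiag.diagonal_diag).symm
    have hPdet : IsUnit P.det := (isUnit_iff_isUnit_det P).mp hP
    have hdprod : ∏ i, d i = 1 := by
      have h1 := Matrix.det_conj hP A
      rw [hΔ, det_diagonal] at h1
      rw [h1, hdet]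
    have hdne : ∀ i, d i ≠ 0 := by
      intro i hi
      have h0 : ∏ i, d i = 0 := Finset.prod_eq_zero (Finset.mem_univ i) hi
      rw [hdprod] at h0; exact one_ne_zero h0
    set c : Fin (m+1) → ℂ := fun i => ∏ j ∈ Finset.Iic i, d j with hc
    have hcne : ∀ i, c i ≠ 0 := fun i =>
      Finset.prod_ne_zero_iff.mpr (fun j _ => hdne j)
    set σ : Perm (Fin (m+1)) := (finRotate (m+1))⁻¹ with hσ
    have hσapp : ∀ i, σ i = i - 1 := by
      intro i
      have h1 : finRotate (m+1) (i - 1) = i := by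
        rw [finRotate_succ_apply]; exact sub_add_cancel i 1
      have h2 := congrArg σ h1
      rw [hσ, Equiv.Perm.inv_def, Equiv.symm_apply_apply] at h2
      exact h2.symm
    have key : ∀ i, c i * (c (σ i))⁻¹ = d i := by
      intro i
      rw [hσapp i]
      rcases eq_or_ne i 0 with rfl | hi
      · have hlast : (0 : Fin (m+1)) - 1 = Fin.last m := by
          ext
          rw [Fin.coe_sub_one, if_pos rfl, Fin.val_last]
        have h2 : c ((0 : Fin (m+1)) - 1) = 1 := by
          rw [hlast, hc]
          simp only
          rw [show Finset.Iic (Fin.last m) = Finset.univ from by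
            ext j; simp [Fin.le_last]]
          exact hdprod
        have h3 : c 0 = d 0 := by
          rw [hc]; simp only
          rw [show Finset.Iic (0 : Fin (m+1)) = {0} from by
            ext j; simp [Fin.le_zero_iff]]
          simp
        rw [h2, h3]; simp
      · have hIic : Finset.Iic i = insert i (Finset.Iic (i - 1)) := by
          ext j
          simp only [Finset.mem_Iic, Finset.mem_insert]
          have hvi : i.val ≠ 0 := fun h => hi (Fin.ext h)
          rw [Fin.le_def, Fin.le_def, Fin.coe_sub_one, if_neg hi, Fin.ext_iff]
          omega
        have hnotmem : i ∉ Finset.Iic (i - 1) := by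
          have hvi : i.val ≠ 0 := fun h => hi (Fin.ext h)
          simp only [Finset.mem_Iic]
          rw [Fin.le_def, Fin.coe_sub_one, if_neg hi]
          omega
        have hci : c i = d i * c (i - 1) := by
          rw [hc]; simp only
          rw [hIic, Finset.prod_insert hnotmem]
        rw [hci, mul_assoc, mul_inv_cancel₀ (hcne (i - 1)), mul_one]
    set C : Matrix (Fin (m+1)) (Fin (m+1)) ℂ := diagonal c with hC
    set C' : Matrix (Fin (m+1)) (Fin (m+1)) ℂ := diagonal (fun i => (c i)⁻¹) with hC'
    set Q : Matrix (Fin (m+1)) (Fin (m+1)) ℂ := σ.permMatrix ℂ with hQ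
    set Q' : Matrix (Fin (m+1)) (Fin (m+1)) ℂ := (σ⁻¹).permMatrix ℂ with hQ'
    have hCC' : C * C' = 1 := by
      rw [hC, hC', diagonal_mul_diagonal, ← diagonal_one]
      have hfun : (fun i => c i * (c i)⁻¹) = fun _ : Fin (m+1) => (1:ℂ) :=
        funext fun i => mul_inv_cancel₀ (hcne i)
      rw [hfun]
    have hQQ' : Q * Q' = 1 := by
      rw [hQ, hQ', Equiv.Perm.permMatrix, Equiv.Perm.permMatrix,
        ← PEquiv.toMatrix_trans, ← Equiv.toPEquiv_trans]
      have hrefl : (σ : Fin (m+1) ≃ Fin (m+1)).trans (σ⁻¹ : Perm (Fin (m+1))) = Equiv.refl _ := by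
        ext x; simp
      rw [hrefl, Equiv.toPEquiv_refl, PEquiv.toMatrix_refl]
    have hCinv : C⁻¹ = C' := inv_eq_right_inv hCC'
    have hQinv : Q⁻¹ = Q' := inv_eq_right_inv hQQ'
    have hconj : Q * C' * Q' = diagonal (fun i => (c (σ i))⁻¹) := by
      rw [hQ, hQ', Equiv.Perm.permMatrix, Equiv.Perm.permMatrix,
        PEquiv.toMatrix_toPEquiv_mul, PEquiv.mul_toMatrix_toPEquiv,
        submatrix_submatrix]
      rw [show (((σ : Fin (m+1) ≃ Fin (m+1)) ∘ id : Fin (m+1) → Fin (m+1))) = σ from by funext x; simp [Equiv.Perm.inv_def],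
        show (id ∘ ((σ⁻¹ : Perm (Fin (m+1))) : Fin (m+1) ≃ Fin (m+1)).symm : Fin (m+1) → Fin (m+1)) = σ from by funext x; simp [Equiv.Perm.inv_def]]
      exact submatrix_diagonal_equiv _ σ
    have hcomm : C * Q * C' * Q' = diagonal d := by
      rw [mul_assoc, mul_assoc, ← mul_assoc Q, hconj, hC, diagonal_mul_diagonal]
      have hfun : (fun i => c i * (c (σ i))⁻¹) = d := funext key
      rw [hfun]
    have hCdet : IsUnit C.det := IsUnit.of_mul_eq_one _ (by rw [← det_mul, hCC', det_one])
    have hQdet : IsUnit Q.det := IsUnit.of_mul_eq_one _ (by rw [← det_mul, hQQ', det_one])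
    have hPP : P * P⁻¹ = 1 := mul_nonsing_inv P hPdet
    have hPP' : P⁻¹ * P = 1 := nonsing_inv_mul P hPdet
    refine ⟨P⁻¹ * C * P, P⁻¹ * Q * P, ?_, ?_, ?_⟩
    · rw [isUnit_iff_isUnit_det, det_mul, det_mul]
      exact ((isUnit_nonsing_inv_det P hPdet).mul hCdet).mul hPdet
    · rw [isUnit_iff_isUnit_det, det_mul, det_mul]
      exact ((isUnit_nonsing_inv_det P hPdet).mul hQdet).mul hPdet
    · have hBinv : (P⁻¹ * C * P)⁻¹ = P⁻¹ * C' * P := by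
        apply inv_eq_right_inv
        simp only [Matrix.mul_assoc]
        simp only [← Matrix.mul_assoc P P⁻¹]
        simp only [hPP, Matrix.one_mul]
        simp only [← Matrix.mul_assoc C C']
        simp only [hCC', Matrix.one_mul, hPP']
      have hDinv : (P⁻¹ * Q * P)⁻¹ = P⁻¹ * Q' * P := by
        apply inv_eq_right_inv
        simp only [Matrix.mul_assoc]
        simp only [← Matrix.mul_assoc P P⁻¹]
        simp only [hPP, Matrix.one_mul]
        simp only [← Matrix.mul_assoc Q Q']
        simp only [hQQ', Matrix.one_mul, hPP']
      rw [hBinv, hDinv]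
      have hA : A = P⁻¹ * (C * Q * C' * Q') * P := by
        rw [hcomm, ← hΔ]
        simp only [Matrix.mul_assoc]
        rw [hPP', Matrix.mul_one, ← Matrix.mul_assoc, hPP', Matrix.one_mul]
      rw [hA]
      simp only [Matrix.mul_assoc]
      simp only [← Matrix.mul_assoc P P⁻¹]
      simp only [hPP, Matrix.one_mul]
end

section
/- Every unipotent element of SL(n, ℂ) is a commutator BDB⁻¹D⁻¹ with B, D ∈ GL(n, ℂ). -/
open Matrix


lemma diag_sim {n : ℕ} (A : Matrix (Fin n) (Fin n) ℂ)
    (hA : ∀ i j : Fin n, j < i → A i j = 0)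
    (hd : Function.Injective (fun i : Fin n => A i i)) :
    ∃ Q : Matrix (Fin n) (Fin n) ℂ,
      IsUnit Q ∧ A * Q = Q * Matrix.diagonal (fun i => A i i) := by
  set d : Fin n → ℂ := fun i => A i i with hd_def
  have hev : ∀ j : Fin n, ∃ v : Fin n → ℂ, v ≠ 0 ∧ A.mulVec v = d j • v := by
    intro j
    have htri : (A - d j • (1 : Matrix (Fin n) (Fin n) ℂ)).BlockTriangular id := by
      intro a b hab
      simp only [Matrix.sub_apply, Matrix.smul_apply, one_apply, smul_eq_mul]
      rw [hA a b hab, if_neg (by exact fun h => absurd h (ne_of_gt hab))]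
      ring
    have hdet : (A - d j • (1 : Matrix (Fin n) (Fin n) ℂ)).det = 0 := by
      rw [Matrix.det_of_upperTriangular htri]
      refine Finset.prod_eq_zero (Finset.mem_univ j) ?_
      simp [d]
    obtain ⟨v, hv0, hv⟩ := (Matrix.exists_mulVec_eq_zero_iff).mpr hdet
    refine ⟨v, hv0, ?_⟩
    rw [Matrix.sub_mulVec, Matrix.smul_mulVec, Matrix.one_mulVec, sub_eq_zero] at hv
    exact hv
  choose v hv0 hv using hev
  have hli : LinearIndependent ℂ v := by
    refine Module.End.eigenvectors_linearIndependent' (Matrix.mulVecLin A) d hd v ?_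
    intro j
    exact ⟨Module.End.mem_eigenspace_iff.mpr (by simpa using hv j), hv0 j⟩
  set Q : Matrix (Fin n) (Fin n) ℂ := Matrix.of fun i j => v j i with hQ_def
  have hQmul : ∀ w : Fin n → ℂ, Q.mulVec w = ∑ k, w k • v k := by
    intro w
    funext i
    simp only [Matrix.mulVec, dotProduct, Finset.sum_apply, Pi.smul_apply, smul_eq_mul]
    exact Finset.sum_congr rfl fun k _ => by simp [hQ_def, mul_comm]
  have hQu : IsUnit Q := by
    rw [Matrix.isUnit_iff_isUnit_det, isUnit_iff_ne_zero]
    intro hzero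
    obtain ⟨w, hw0, hw⟩ := (Matrix.exists_mulVec_eq_zero_iff).mpr hzero
    rw [hQmul] at hw
    exact hw0 (funext fun i => Fintype.linearIndependent_iff.mp hli w hw i)
  refine ⟨Q, hQu, ?_⟩
  ext i j
  have := congrFun (hv j) i
  simp only [Matrix.mulVec, dotProduct, Pi.smul_apply, smul_eq_mul] at this
  rw [Matrix.mul_apply, Matrix.mul_diagonal]
  calc (∑ k, A i k * Q k j) = d j * v j i := by
        rw [← this]; exact Finset.sum_congr rfl fun k _ => by simp [hQ_def]
    _ = Q i j * d j := by rw [mul_comm]; simp [hQ_def]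


open Matrix

lemma fb_pow {n : ℕ} (c : Matrix (Fin 1) (Fin n) ℂ) (X : Matrix (Fin n) (Fin n) ℂ) (k : ℕ) :
    (fromBlocks (0 : Matrix (Fin 1) (Fin 1) ℂ) c (0 : Matrix (Fin n) (Fin 1) ℂ) X) ^ (k+1)
      = fromBlocks 0 (c * X ^ k) 0 (X ^ (k+1)) := by
  induction k with
  | zero => simp
  | succ k ih =>
      rw [pow_succ, ih, fromBlocks_multiply]
      simp [Matrix.mul_assoc, pow_succ]

lemma conj_pow' {n : ℕ} (P X : Matrix (Fin n) (Fin n) ℂ) (h1 : P⁻¹ * P = 1)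
    (h2 : P * P⁻¹ = 1) (k : ℕ) :
    (P⁻¹ * X * P) ^ k = P⁻¹ * X ^ k * P := by
  induction k with
  | zero => rw [pow_zero, pow_zero, mul_one, h1]
  | succ k ih =>
      rw [pow_succ, ih, pow_succ]
      calc P⁻¹ * X ^ k * P * (P⁻¹ * X * P)
          = P⁻¹ * X ^ k * (P * P⁻¹) * X * P := by
            simp only [Matrix.mul_assoc]
        _ = P⁻¹ * (X ^ k * X) * P := by rw [h2]; simp only [Matrix.mul_assoc, Matrix.one_mul]

lemma tri : ∀ (n : ℕ) (A : Matrix (Fin n) (Fin n) ℂ), IsNilpotent (A - 1) →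
    ∃ P T : Matrix (Fin n) (Fin n) ℂ, IsUnit P ∧ (∀ i j, j < i → T i j = 0) ∧
      (∀ i, T i i = 1) ∧ A * P = P * T := by
  intro n
  induction n with
  | zero =>
      intro A _
      exact ⟨1, A, isUnit_one, fun i => i.elim0, fun i => i.elim0, by rw [mul_one, one_mul]⟩
  | succ n ih =>
      intro A hnil
      obtain ⟨m, hm⟩ := hnil
      haveI : Nonempty (Fin (n+1)) := ⟨0⟩
      have hdet : (A - 1).det = 0 := by
        have h0 : ((A - 1).det) ^ (m + 1) = 0 := by
          rw [← det_pow, pow_succ, hm, zero_mul]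
          exact det_zero
        exact pow_eq_zero_iff (Nat.succ_ne_zero m) |>.mp h0
      obtain ⟨v, hv0, hv1⟩ := Matrix.exists_mulVec_eq_zero_iff.mpr hdet
      have hAv : A *ᵥ v = v := by
        rwa [sub_mulVec, one_mulVec, sub_eq_zero] at hv1
      obtain ⟨i₀, hi₀⟩ := Function.ne_iff.mp hv0
      set P : Matrix (Fin (n+1)) (Fin (n+1)) ℂ :=
        ((1 : Matrix (Fin (n+1)) (Fin (n+1)) ℂ).updateCol i₀ v).submatrix id
          ⇑(Equiv.swap (0 : Fin (n+1)) i₀) with hP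
      have hPdet : IsUnit P.det := by
        have h1 : ((1 : Matrix (Fin (n+1)) (Fin (n+1)) ℂ).updateCol i₀ v).det = v i₀ := by
          rw [← cramer_apply, cramer_one]
          rfl
        rw [hP, det_permute', h1]
        refine IsUnit.mul ?_ (isUnit_iff_ne_zero.mpr hi₀)
        simpa using (Perm.sign (Equiv.swap (0 : Fin (n+1)) i₀)).isUnit.map (Int.castRingHom ℂ)
      have hPu : IsUnit P := (Matrix.isUnit_iff_isUnit_det _).mpr hPdet
      have hPcol : ∀ i, P i 0 = v i := by
        intro i
        rw [hP]
        simp [Matrix.submatrix_apply, Equiv.swap_apply_left, Matrix.updateCol_self]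
      set B := P⁻¹ * A * P with hB
      have hPP : P⁻¹ * P = 1 := nonsing_inv_mul P hPdet
      have hPP' : P * P⁻¹ = 1 := mul_nonsing_inv P hPdet
      have hAP : A * P = P * B := by
        rw [hB, ← Matrix.mul_assoc, ← Matrix.mul_assoc, hPP', one_mul]
      have hPe : P *ᵥ Pi.single (0 : Fin (n+1)) (1 : ℂ) = v := by
        rw [mulVec_single]
        funext i
        simp [hPcol i]
      have hB0 : ∀ i, B i 0 = (Pi.single (0 : Fin (n+1)) (1:ℂ) : Fin (n+1) → ℂ) i := by
        have hBv : B *ᵥ Pi.single (0 : Fin (n+1)) (1 : ℂ) = Pi.single (0 : Fin (n+1)) (1 : ℂ) := by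
          rw [hB, ← mulVec_mulVec, ← mulVec_mulVec, hPe, hAv, ← hPe, mulVec_mulVec, hPP,
            one_mulVec]
        intro i
        have h := congrFun hBv i
        rw [mulVec_single] at h
        simpa using h
      have hBnil : (B - 1) ^ m = 0 := by
        have hB1 : B - 1 = P⁻¹ * (A - 1) * P := by
          rw [Matrix.mul_sub, Matrix.sub_mul, mul_one, hPP, hB]
        rw [hB1, conj_pow' P (A-1) hPP hPP', hm, mul_zero, zero_mul]
      -- block structure
      let q : (Fin 1 ⊕ Fin n) ≃ Fin (n+1) :=
        { toFun := Sum.elim (fun _ => 0) Fin.succ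
          invFun := fun i => Fin.cases (Sum.inl 0) Sum.inr i
          left_inv := by
            rintro (x | x)
            · simp [Subsingleton.elim x 0]
            · simp
          right_inv := by
            intro i
            induction i using Fin.cases <;> simp }
      have hq0' : q.symm 0 = Sum.inl 0 := by simp [q]
      have hqs' : ∀ k : Fin n, q.symm k.succ = Sum.inr k := by intro k; simp [q]
      set C : Matrix (Fin 1 ⊕ Fin n) (Fin 1 ⊕ Fin n) ℂ := B.submatrix q q with hCdef
      set c : Matrix (Fin 1) (Fin n) ℂ := C.toBlocks₁₂ with hc
      set E : Matrix (Fin n) (Fin n) ℂ := C.toBlocks₂₂ with hE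
      have hCblocks : C = fromBlocks 1 c 0 E := by
        ext i j
        cases i with
        | inl i =>
            cases j with
            | inl j =>
                have hij : i = j := Subsingleton.elim i j
                subst hij
                have : C (Sum.inl i) (Sum.inl i) = B 0 0 := rfl
                rw [this, hB0 0, fromBlocks_apply₁₁, Matrix.one_apply_eq, Pi.single_eq_same]
            | inr j => rfl
        | inr i =>
            cases j with
            | inl j =>
                have : C (Sum.inr i) (Sum.inl j) = B i.succ 0 := rfl
                rw [this, hB0 i.succ, fromBlocks_apply₂₁, Pi.single_eq_of_ne (Fin.succ_ne_zero i)]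
                rfl
            | inr j => rfl
      have hC1 : C - 1 = (B - 1).submatrix ⇑q ⇑q := by
        ext i j
        rw [Matrix.sub_apply, Matrix.submatrix_apply, Matrix.sub_apply, hCdef,
          Matrix.submatrix_apply]
        simp [Matrix.one_apply, q.injective.eq_iff]
      have hCpow : ∀ k, (C - 1) ^ k = ((B - 1) ^ k).submatrix ⇑q ⇑q := by
        intro k
        induction k with
        | zero => rw [pow_zero, pow_zero, submatrix_one_equiv]
        | succ k ihk => rw [pow_succ, pow_succ, ihk, hC1, submatrix_mul_equiv]
      have hCnil : (C - 1) ^ m = 0 := by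
        rw [hCpow, hBnil]
        ext i j
        simp
      have hEnil : IsNilpotent (E - 1) := by
        refine ⟨m + 1, ?_⟩
        have h1 : (C - 1) ^ (m+1) = 0 := by rw [pow_succ, hCnil, zero_mul]
        have h2 : C - 1 = fromBlocks 0 c 0 (E - 1) := by
          rw [hCblocks, ← fromBlocks_one]
          ext i j
          cases i <;> cases j <;> simp [Matrix.sub_apply, Matrix.one_apply]
        rw [h2, fb_pow] at h1
        have := congrArg Matrix.toBlocks₂₂ h1
        rw [toBlocks_fromBlocks₂₂] at this
        rw [this]
        ext i j
        simp [Matrix.toBlocks₂₂]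
      obtain ⟨R, T', hRu, hT'low, hT'diag, hER⟩ := ih E hEnil
      set P₂ : Matrix (Fin 1 ⊕ Fin n) (Fin 1 ⊕ Fin n) ℂ := fromBlocks 1 0 0 R with hP₂
      set Tb : Matrix (Fin 1 ⊕ Fin n) (Fin 1 ⊕ Fin n) ℂ := fromBlocks 1 (c * R) 0 T' with hTb
      have hCP : C * P₂ = P₂ * Tb := by
        rw [hCblocks, hP₂, hTb, fromBlocks_multiply, fromBlocks_multiply]
        simp [hER]
      have hP₂u : IsUnit P₂.det := by
        rw [hP₂, det_fromBlocks_zero₂₁, det_one, one_mul]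
        exact (Matrix.isUnit_iff_isUnit_det _).mp hRu
      set P₂' : Matrix (Fin (n+1)) (Fin (n+1)) ℂ := P₂.submatrix ⇑q.symm ⇑q.symm with hP₂'
      set Tf : Matrix (Fin (n+1)) (Fin (n+1)) ℂ := Tb.submatrix ⇑q.symm ⇑q.symm with hTf
      have hBsub : C.submatrix ⇑q.symm ⇑q.symm = B := by
        ext i j
        simp [hCdef]
      have hBP : B * P₂' = P₂' * Tf := by
        calc B * P₂' = (C * P₂).submatrix ⇑q.symm ⇑q.symm := by
              rw [← hBsub, hP₂', submatrix_mul_equiv]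
          _ = (P₂ * Tb).submatrix ⇑q.symm ⇑q.symm := by rw [hCP]
          _ = P₂' * Tf := (submatrix_mul_equiv P₂ Tb _ q.symm _).symm
      have hP₂'u : IsUnit P₂' := by
        rw [Matrix.isUnit_iff_isUnit_det, hP₂', det_submatrix_equiv_self]
        exact hP₂u
      refine ⟨P * P₂', Tf, hPu.mul hP₂'u, ?_, ?_, ?_⟩
      · intro i j hji
        rcases Fin.eq_zero_or_eq_succ i with hi | ⟨k, rfl⟩
        · exact absurd hji (by simp [hi, Fin.not_lt_zero])
        · rcases Fin.eq_zero_or_eq_succ j with hj | ⟨l, rfl⟩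
          · subst hj
            rw [hTf, Matrix.submatrix_apply, hq0', hqs', hTb, fromBlocks_apply₂₁]
            rfl
          · have hlk : l < k := by
              rwa [Fin.succ_lt_succ_iff] at hji
            rw [hTf, Matrix.submatrix_apply, hqs', hqs', hTb, fromBlocks_apply₂₂]
            exact hT'low k l hlk
      · intro i
        rcases Fin.eq_zero_or_eq_succ i with hi | ⟨k, rfl⟩
        · subst hi
          rw [hTf, Matrix.submatrix_apply, hq0', hTb, fromBlocks_apply₁₁, Matrix.one_apply_eq]
        · rw [hTf, Matrix.submatrix_apply, hqs', hTb, fromBlocks_apply₂₂]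
          exact hT'diag k
      · rw [← Matrix.mul_assoc, hAP, Matrix.mul_assoc, hBP, Matrix.mul_assoc]

/-- Every unipotent element of `SL(n, ℂ)` is a commutator `BDB⁻¹D⁻¹` with
`B, D ∈ GL(n, ℂ)`. -/
theorem stmt_8 (n : ℕ) (U : Matrix (Fin n) (Fin n) ℂ) (hU : (U - 1) ^ n = 0) :
    ∃ B D : Matrix (Fin n) (Fin n) ℂ, IsUnit B ∧ IsUnit D ∧ U = B * D * B⁻¹ * D⁻¹ := by
  obtain ⟨P, T, hPu, hTlow, hTdiag, hUP⟩ := tri n U ⟨n, hU⟩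
  set d : Fin n → ℂ := fun i => (2 : ℂ) ^ (i : ℕ) with hd_def
  have hd : Function.Injective d := by
    intro i j hij
    have : ((2 ^ (i:ℕ) : ℕ) : ℂ) = ((2 ^ (j:ℕ) : ℕ) : ℂ) := by push_cast; exact hij
    exact Fin.ext (Nat.pow_right_injective (le_refl 2) (Nat.cast_injective this))
  set D : Matrix (Fin n) (Fin n) ℂ := Matrix.diagonal d with hD_def
  have hdne : ∀ i, d i ≠ 0 := fun i => pow_ne_zero _ two_ne_zero
  have hDdet : IsUnit D.det := by
    rw [hD_def, det_diagonal]
    exact isUnit_iff_ne_zero.mpr (Finset.prod_ne_zero_iff.mpr fun i _ => hdne i)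
  have hDu : IsUnit D := (Matrix.isUnit_iff_isUnit_det _).mpr hDdet
  -- A = T * D is upper triangular with diagonal d
  have hTD_low : ∀ i j : Fin n, j < i → (T * D) i j = 0 := by
    intro i j hji
    rw [hD_def, mul_diagonal, hTlow i j hji, zero_mul]
  have hTD_diag : ∀ i, (T * D) i i = d i := by
    intro i
    rw [hD_def, mul_diagonal, hTdiag i, one_mul]
  have hdiag_eq : (fun i => (T * D) i i) = d := funext hTD_diag
  obtain ⟨Q, hQu, hAQ⟩ := diag_sim (T * D) hTD_low (by rw [hdiag_eq]; exact hd)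
  rw [hdiag_eq, ← hD_def] at hAQ
  -- T = Q * D * Q⁻¹ * D⁻¹
  have hQdet : IsUnit Q.det := (Matrix.isUnit_iff_isUnit_det _).mp hQu
  have hQQ : Q * Q⁻¹ = 1 := mul_nonsing_inv Q hQdet
  have hDD : D * D⁻¹ = 1 := mul_nonsing_inv D hDdet
  have hT : T = Q * D * Q⁻¹ * D⁻¹ := by
    have h1 : T * D * Q * Q⁻¹ = Q * D * Q⁻¹ := by rw [hAQ, Matrix.mul_assoc]
    have h2 : T * D = Q * D * Q⁻¹ := by
      rw [← h1, Matrix.mul_assoc, Matrix.mul_assoc, hQQ, mul_one]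
    rw [← h2, Matrix.mul_assoc, hDD, mul_one]
  -- conjugate everything by P
  have hPdet : IsUnit P.det := (Matrix.isUnit_iff_isUnit_det _).mp hPu
  have hPP : P * P⁻¹ = 1 := mul_nonsing_inv P hPdet
  have hPP' : P⁻¹ * P = 1 := nonsing_inv_mul P hPdet
  have hU_eq : U = P * T * P⁻¹ := by
    rw [← hUP, Matrix.mul_assoc, hPP, mul_one]
  have hPinvu : IsUnit P⁻¹ := ⟨⟨P⁻¹, P, hPP', hPP⟩, rfl⟩
  refine ⟨P * Q * P⁻¹, P * D * P⁻¹, (hPu.mul hQu).mul hPinvu, (hPu.mul hDu).mul hPinvu, ?_⟩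
  have hinv1 : (P * Q * P⁻¹)⁻¹ = P * Q⁻¹ * P⁻¹ := by
    rw [Matrix.mul_inv_rev, Matrix.mul_inv_rev, Matrix.nonsing_inv_nonsing_inv P hPdet,
      Matrix.mul_assoc]
  have hinv2 : (P * D * P⁻¹)⁻¹ = P * D⁻¹ * P⁻¹ := by
    rw [Matrix.mul_inv_rev, Matrix.mul_inv_rev, Matrix.nonsing_inv_nonsing_inv P hPdet,
      Matrix.mul_assoc]
  rw [hinv1, hinv2, hU_eq, hT]
  have hcancel : ∀ X : Matrix (Fin n) (Fin n) ℂ, P⁻¹ * (P * X) = X := by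
    intro X
    rw [← Matrix.mul_assoc, hPP', one_mul]
  simp only [Matrix.mul_assoc, hcancel]
end

section
/- Let B, D ∈ GL(n, ℂ) be such that the only matrices commuting with both are scalars. Then the linear map gl(n,ℂ) × gl(n,ℂ) → sl(n,ℂ) given by (x, y) ↦ DB(D⁻¹xD − x + y − B⁻¹yB)B⁻¹D⁻¹ is surjective. -/
open Matrix

/-- Trace of `E_{ij} * N` is `N j i`. -/
lemma trace_stdBasisMatrix_mul' {n : ℕ} (i j : Fin n) (N : Matrix (Fin n) (Fin n) ℂ) :
    (Matrix.single i j (1 : ℂ) * N).trace = N j i := by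
  simp [Matrix.trace, Matrix.diag, Matrix.mul_apply, Matrix.single,
    Finset.sum_ite_eq, ite_and]

/-- If `trace (A * N) = 0` for all `A`, then `N = 0`. -/
lemma eq_zero_of_forall_trace_mul_eq_zero {n : ℕ} (N : Matrix (Fin n) (Fin n) ℂ)
    (h : ∀ A : Matrix (Fin n) (Fin n) ℂ, (A * N).trace = 0) : N = 0 := by
  ext i j
  have := h (Matrix.single j i (1 : ℂ))
  rwa [trace_stdBasisMatrix_mul'] at this

lemma trace_mul_repr {n : ℕ} (f : Module.Dual ℂ (Matrix (Fin n) (Fin n) ℂ))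
    (A : Matrix (Fin n) (Fin n) ℂ) :
    (A * Matrix.of (fun i j => f (Matrix.single j i (1 : ℂ)))).trace = f A := by
  have hA : A = ∑ k : Fin n, ∑ l : Fin n, Matrix.single k l (A k l) :=
    Matrix.matrix_eq_sum_single A
  have hfA : f A = ∑ k : Fin n, ∑ l : Fin n, A k l * f (Matrix.single k l (1 : ℂ)) := by
    conv_lhs => rw [hA]
    rw [map_sum]
    refine Finset.sum_congr rfl fun k _ => ?_
    rw [map_sum]
    refine Finset.sum_congr rfl fun l _ => ?_
    have h1 : Matrix.single k l (A k l) = (A k l) • Matrix.single k l (1 : ℂ) := by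
      rw [Matrix.smul_single, smul_eq_mul, mul_one]
    rw [h1, f.map_smul, smul_eq_mul]
  rw [hfA]
  simp only [Matrix.trace, Matrix.diag, Matrix.mul_apply, Matrix.of_apply]

/-- The key surjectivity lemma before conjugation. -/
lemma key {n : ℕ} (B D : Matrix (Fin n) (Fin n) ℂ) (hB : IsUnit B) (hD : IsUnit D)
    (hZ : ∀ K : Matrix (Fin n) (Fin n) ℂ, K * B = B * K → K * D = D * K →
      ∃ c : ℂ, K = c • (1 : Matrix (Fin n) (Fin n) ℂ)) :
    ∀ w : Matrix (Fin n) (Fin n) ℂ, w.trace = 0 →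
      ∃ x y : Matrix (Fin n) (Fin n) ℂ, D⁻¹ * x * D - x + y - B⁻¹ * y * B = w := by
  intro w hw
  have hBdet : IsUnit B.det := (Matrix.isUnit_iff_isUnit_det B).mp hB
  have hDdet : IsUnit D.det := (Matrix.isUnit_iff_isUnit_det D).mp hD
  let Φ : (Matrix (Fin n) (Fin n) ℂ × Matrix (Fin n) (Fin n) ℂ) →ₗ[ℂ] Matrix (Fin n) (Fin n) ℂ :=
    { toFun := fun p => D⁻¹ * p.1 * D - p.1 + p.2 - B⁻¹ * p.2 * B
      map_add' := by
        intro p q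
        simp only [Prod.fst_add, Prod.snd_add, mul_add, add_mul]
        abel
      map_smul' := by
        intro c p
        simp only [Prod.smul_fst, Prod.smul_snd, mul_smul_comm, smul_mul_assoc,
          RingHom.id_apply, smul_sub, smul_add]
    }
  by_contra hcon
  push_neg at hcon
  have hwmem : w ∉ LinearMap.range Φ := by
    rintro ⟨⟨x, y⟩, hxy⟩
    exact hcon x y hxy
  obtain ⟨f, hfw, hfbot⟩ :=
    (LinearMap.range Φ).exists_dual_map_eq_bot_of_notMem hwmem inferInstance
  have hfker : ∀ u ∈ LinearMap.range Φ, f u = 0 := by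
    intro u hu
    have h1 : f u ∈ (LinearMap.range Φ).map f := Submodule.mem_map_of_mem hu
    rw [hfbot] at h1
    simpa using h1
  set M : Matrix (Fin n) (Fin n) ℂ :=
    Matrix.of (fun i j => f (Matrix.single j i (1 : ℂ))) with hM
  -- M commutes with D
  have hMD : M * D = D * M := by
    have h1 : D * M * D⁻¹ - M = 0 := by
      apply eq_zero_of_forall_trace_mul_eq_zero
      intro A
      have hmem : (D⁻¹ * A * D - A : Matrix (Fin n) (Fin n) ℂ) ∈ LinearMap.range Φ :=
        ⟨(A, 0), by simp [Φ]⟩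
      have h0 : f (D⁻¹ * A * D - A) = 0 := hfker _ hmem
      have e1 : (A * (D * M * D⁻¹ - M)).trace = ((D⁻¹ * A * D - A) * M).trace := by
        rw [Matrix.mul_sub, Matrix.sub_mul, Matrix.trace_sub, Matrix.trace_sub]
        congr 1
        rw [show D⁻¹ * A * D * M = D⁻¹ * A * (D * M) by rw [Matrix.mul_assoc]]
        rw [Matrix.trace_mul_comm (D⁻¹ * A) (D * M)]
        rw [Matrix.trace_mul_comm A (D * M * D⁻¹)]
        rw [Matrix.mul_assoc (D * M) D⁻¹ A]
      rw [e1, hM, trace_mul_repr, h0]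
    have h2 : D * M * D⁻¹ = M := sub_eq_zero.mp h1
    calc M * D = D * M * D⁻¹ * D := by rw [h2]
    _ = D * M := Matrix.nonsing_inv_mul_cancel_right D (D * M) hDdet
  -- M commutes with B
  have hMB : M * B = B * M := by
    have h1 : M - B * M * B⁻¹ = 0 := by
      apply eq_zero_of_forall_trace_mul_eq_zero
      intro A
      have hmem : (A - B⁻¹ * A * B : Matrix (Fin n) (Fin n) ℂ) ∈ LinearMap.range Φ :=
        ⟨(0, A), by simp [Φ]⟩
      have h0 : f (A - B⁻¹ * A * B) = 0 := hfker _ hmem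
      have e1 : (A * (M - B * M * B⁻¹)).trace = ((A - B⁻¹ * A * B) * M).trace := by
        rw [Matrix.mul_sub, Matrix.sub_mul, Matrix.trace_sub, Matrix.trace_sub]
        congr 1
        rw [show B⁻¹ * A * B * M = B⁻¹ * A * (B * M) by rw [Matrix.mul_assoc]]
        rw [Matrix.trace_mul_comm (B⁻¹ * A) (B * M)]
        rw [Matrix.trace_mul_comm A (B * M * B⁻¹)]
        rw [Matrix.mul_assoc (B * M) B⁻¹ A]
      rw [e1, hM, trace_mul_repr, h0]
    have h2 : M = B * M * B⁻¹ := (sub_eq_zero.mp h1)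
    calc M * B = B * M * B⁻¹ * B := by rw [← h2]
    _ = B * M := Matrix.nonsing_inv_mul_cancel_right B (B * M) hBdet
  obtain ⟨c, hc⟩ := hZ M hMB hMD
  apply hfw
  rw [← trace_mul_repr f w, ← hM, hc]
  rw [mul_smul_comm, mul_one, Matrix.trace_smul, hw, smul_zero]

/-- If the only matrices commuting with both `B, D ∈ GL(n, ℂ)` are scalars, then the linear
map `gl(n,ℂ) × gl(n,ℂ) → sl(n,ℂ)`, `(x, y) ↦ DB(D⁻¹xD − x + y − B⁻¹yB)B⁻¹D⁻¹`
(the differential of the commutator map) is surjective onto the trace-zero matrices. -/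
theorem stmt_11 (n : ℕ) (B D : Matrix (Fin n) (Fin n) ℂ) (hB : IsUnit B) (hD : IsUnit D)
    (hZ : ∀ K : Matrix (Fin n) (Fin n) ℂ, K * B = B * K → K * D = D * K →
      ∃ c : ℂ, K = c • (1 : Matrix (Fin n) (Fin n) ℂ)) :
    ∀ z : Matrix (Fin n) (Fin n) ℂ, z.trace = 0 →
      ∃ x y : Matrix (Fin n) (Fin n) ℂ,
        D * B * (D⁻¹ * x * D - x + y - B⁻¹ * y * B) * B⁻¹ * D⁻¹ = z := by
  intro z hz
  have hBdet : IsUnit B.det := (Matrix.isUnit_iff_isUnit_det B).mp hB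
  have hDdet : IsUnit D.det := (Matrix.isUnit_iff_isUnit_det D).mp hD
  have hwt : (B⁻¹ * D⁻¹ * z * D * B).trace = 0 := by
    rw [Matrix.trace_mul_comm (B⁻¹ * D⁻¹ * z * D) B]
    rw [show B * (B⁻¹ * D⁻¹ * z * D) = B * B⁻¹ * (D⁻¹ * z * D) by
      simp only [Matrix.mul_assoc]]
    rw [Matrix.mul_nonsing_inv B hBdet, Matrix.one_mul]
    rw [Matrix.trace_mul_comm (D⁻¹ * z) D,
      show D * (D⁻¹ * z) = z from Matrix.mul_nonsing_inv_cancel_left D z hDdet, hz]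
  obtain ⟨x, y, hxy⟩ := key B D hB hD hZ _ hwt
  refine ⟨x, y, ?_⟩
  rw [hxy]
  rw [show D * B * (B⁻¹ * D⁻¹ * z * D * B) * B⁻¹ * D⁻¹
      = D * (B * B⁻¹) * D⁻¹ * z * D * (B * B⁻¹) * D⁻¹ by simp only [Matrix.mul_assoc]]
  rw [Matrix.mul_nonsing_inv B hBdet]
  rw [show D * 1 * D⁻¹ * z * D * 1 * D⁻¹ = D * D⁻¹ * z * (D * D⁻¹) by
    simp only [Matrix.mul_one, Matrix.mul_assoc]]
  rw [Matrix.mul_nonsing_inv D hDdet]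
  simp
end

section
/- Let B, D ∈ GL(n, ℂ) such that the commutator C = BDB⁻¹D⁻¹ has property P (no product of a nonempty proper sub-multiset of eigenvalues of C equals 1; equivalently det(C|_W) ≠ 1 for every nonzero proper invariant subspace W of C). Then the subalgebra of Matₙ(ℂ) generated by B, D, B⁻¹, D⁻¹ is all of Matₙ(ℂ). -/
open Module Polynomial

section burnside

variable {𝕜 V : Type*} [Field 𝕜] [IsAlgClosed 𝕜] [AddCommGroup V] [Module 𝕜 V]
  [FiniteDimensional 𝕜 V] (A : Subalgebra 𝕜 (Module.End 𝕜 V))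
  (hirr : ∀ W : Submodule 𝕜 V, (∀ f ∈ A, ∀ x ∈ W, f x ∈ W) → W = ⊥ ∨ W = ⊤)

include hirr

lemma schur_scalar [Nontrivial V] (g : Module.End 𝕜 V)
    (hg : ∀ a ∈ A, a * g = g * a) : ∃ μ : 𝕜, g = μ • (1 : Module.End 𝕜 V) := by
  obtain ⟨μ, hμ⟩ := Module.End.exists_eigenvalue g
  refine ⟨μ, ?_⟩
  have hinv : ∀ f ∈ A, ∀ x ∈ g.eigenspace μ, f x ∈ g.eigenspace μ := by
    intro f hf x hx
    rw [Module.End.mem_eigenspace_iff] at hx ⊢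
    calc g (f x) = (g * f) x := rfl
    _ = (f * g) x := by rw [hg f hf]
    _ = f (g x) := rfl
    _ = μ • f x := by rw [hx, map_smul]
  rcases hirr _ hinv with h | h
  · exact absurd h hμ
  · ext x
    have hx : x ∈ g.eigenspace μ := h ▸ Submodule.mem_top
    rw [Module.End.mem_eigenspace_iff] at hx
    simpa using hx

lemma density : ∀ (k : ℕ) (v : Fin k → V), LinearIndependent 𝕜 v → ∀ w : Fin k → V,
    ∃ a ∈ A, ∀ i, a (v i) = w i := by
  intro k
  induction k with
  | zero => exact fun v _ w => ⟨0, zero_mem _, fun i => i.elim0⟩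
  | succ k ih =>
    intro v hv w
    set vl := v (Fin.last k) with hvl
    have hv' : LinearIndependent 𝕜 (v ∘ Fin.castSucc) :=
      hv.comp _ (Fin.castSucc_injective k)
    let W : Submodule 𝕜 V :=
      { carrier := {x | ∃ a ∈ A, (∀ i : Fin k, a (v i.castSucc) = 0) ∧ a vl = x}
        add_mem' := by
          rintro x y ⟨a, ha, h1, rfl⟩ ⟨b, hb, h2, rfl⟩
          exact ⟨a + b, add_mem ha hb, fun i => by
            simp [LinearMap.add_apply, h1 i, h2 i], rfl⟩
        zero_mem' := ⟨0, zero_mem _, fun i => rfl, rfl⟩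
        smul_mem' := by
          rintro c x ⟨a, ha, h1, rfl⟩
          exact ⟨c • a, SMulMemClass.smul_mem c ha, fun i => by
            simp [LinearMap.smul_apply, h1 i], rfl⟩ }
    have hWinv : ∀ f ∈ A, ∀ x ∈ W, f x ∈ W := by
      rintro f hf x ⟨a, ha, h1, rfl⟩
      exact ⟨f * a, mul_mem hf ha, fun i => by
        simp [Module.End.mul_apply, h1 i], rfl⟩
    rcases hirr W hWinv with hbot | htop
    · -- Schur case
      exfalso
      have hvlne : vl ≠ 0 := hv.ne_zero (Fin.last k)
      have : Nontrivial V := nontrivial_of_ne vl 0 hvlne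
      -- Φ : A-as-submodule → V^k
      let AS := Subalgebra.toSubmodule A
      let Φ : AS →ₗ[𝕜] (Fin k → V) :=
        { toFun := fun a => fun i => (a : Module.End 𝕜 V) (v i.castSucc)
          map_add' := fun a b => by ext i; simp [LinearMap.add_apply]
          map_smul' := fun c a => by ext i; simp [LinearMap.smul_apply] }
      let Ψ : AS →ₗ[𝕜] V :=
        { toFun := fun a => (a : Module.End 𝕜 V) vl
          map_add' := fun a b => by simp [LinearMap.add_apply]
          map_smul' := fun c a => by simp [LinearMap.smul_apply] }
      have hsurj : Function.Surjective Φ := by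
        intro w'
        obtain ⟨a, ha, haw⟩ := ih (v ∘ Fin.castSucc) hv' w'
        exact ⟨⟨a, ha⟩, funext fun i => haw i⟩
      have hker : LinearMap.ker Φ ≤ LinearMap.ker Ψ := by
        intro a hai
        have h0 : ∀ i : Fin k, (a : Module.End 𝕜 V) (v i.castSucc) = 0 := by
          intro i
          exact congrFun (LinearMap.mem_ker.mp hai) i
        have : (a : Module.End 𝕜 V) vl ∈ W := ⟨a, a.2, h0, rfl⟩
        rw [hbot] at this
        simpa [Ψ, LinearMap.mem_ker] using this
      -- factor Ψ through Φ
      let eq1 := LinearMap.quotKerEquivOfSurjective Φ hsurj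
      let f : (Fin k → V) →ₗ[𝕜] V :=
        (LinearMap.ker Φ).liftQ Ψ hker ∘ₗ (eq1.symm : (Fin k → V) →ₗ[𝕜] _)
      have hfΦ : ∀ a : AS, f (Φ a) = Ψ a := by
        intro a
        have h1 : eq1.symm (Φ a) = Submodule.Quotient.mk a := by
          apply eq1.injective
          rw [LinearEquiv.apply_symm_apply]
          rfl
        simp only [f, LinearMap.comp_apply, LinearEquiv.coe_coe, h1]
        rfl
      -- f is A-equivariant on each coordinate
      have hequiv : ∀ (b : Module.End 𝕜 V), b ∈ A → ∀ x : Fin k → V,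
          f (fun i => b (x i)) = b (f x) := by
        intro b hb x
        obtain ⟨a, rfl⟩ := hsurj x
        have h1 : (fun i => b (Φ a i)) = Φ ⟨b * a.1, (Subalgebra.mem_toSubmodule A).mpr
            (A.mul_mem hb ((Subalgebra.mem_toSubmodule A).mp a.2))⟩ := by
          funext i; rfl
        rw [h1, hfΦ, hfΦ]
        rfl
      -- single-coordinate maps
      have hμ : ∀ j : Fin k, ∃ μ : 𝕜, (f ∘ₗ LinearMap.single 𝕜 (fun _ : Fin k => V) j)
          = μ • (1 : Module.End 𝕜 V) := by
        intro j
        apply schur_scalar A hirr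
        intro b hb
        ext x
        simp only [Module.End.mul_apply, LinearMap.comp_apply, LinearMap.single_apply]
        have h1 : (Pi.single j (b x) : Fin k → V)
            = fun i => b ((Pi.single j x : Fin k → V) i) := by
          funext i
          by_cases h : i = j
          · subst h; simp
          · simp [Pi.single_eq_of_ne h]
        symm
        calc f (Pi.single j (b x))
            = f (fun i => b ((Pi.single j x : Fin k → V) i)) := by rw [h1]
          _ = b (f (Pi.single j x)) := hequiv b hb _
      choose μ hμ using hμ
      -- contradiction with linear independence
      have hone : f (fun i => v i.castSucc) = vl := by
        have h1 : (fun i : Fin k => v i.castSucc) = Φ ⟨1, one_mem A⟩ := by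
          funext i; rfl
        rw [h1, hfΦ]; rfl
      have hdecomp : f (fun i : Fin k => v i.castSucc)
          = ∑ j : Fin k, μ j • v j.castSucc := by
        have h1 : (fun i : Fin k => v i.castSucc)
            = ∑ j : Fin k, Pi.single j (v j.castSucc) := by
          funext i
          rw [Finset.sum_apply]
          simp [Pi.single_apply]
        rw [h1, map_sum]
        congr 1
        funext j
        have := congrFun (congrArg DFunLike.coe (hμ j)) (v j.castSucc)
        simpa using this
      have hcomb : ∑ j : Fin k, μ j • v j.castSucc = vl := by rw [← hdecomp, hone]
      have := Fintype.linearIndependent_iff.mp hv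
        (Fin.snoc μ (-1) : Fin (k+1) → 𝕜)
      have hsum : ∑ i : Fin (k+1), (Fin.snoc μ (-1) : Fin (k+1) → 𝕜) i • v i = 0 := by
        rw [Fin.sum_univ_castSucc]
        simp only [Fin.snoc_castSucc, Fin.snoc_last]
        rw [hcomb]  -- careful
        simp [hvl]
      have hlast := this hsum (Fin.last k)
      simp at hlast
    · -- correction case
      obtain ⟨a₀, ha₀, ha₀w⟩ := ih (v ∘ Fin.castSucc) hv' (w ∘ Fin.castSucc)
      have hx : w (Fin.last k) - a₀ vl ∈ W := htop ▸ Submodule.mem_top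
      obtain ⟨c, hc, hc1, hc2⟩ := hx
      refine ⟨a₀ + c, add_mem ha₀ hc, ?_⟩
      intro i
      induction i using Fin.lastCases with
      | last => simp only [LinearMap.add_apply, ← hvl, hc2]; abel
      | cast j =>
        simp only [LinearMap.add_apply, hc1 j]
        have := ha₀w j
        simp only [Function.comp_apply] at this
        rw [this, add_zero]

lemma burnside : A = ⊤ := by
  rcases subsingleton_or_nontrivial V with h | h
  · have : Subsingleton (Module.End 𝕜 V) := by
      constructor
      intro f g
      ext x
      exact Subsingleton.elim _ _
    exact Subsingleton.elim _ _
  · rw [eq_top_iff]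
    intro f _
    let b := finBasis 𝕜 V
    obtain ⟨a, ha, hab⟩ := density A hirr _ b b.linearIndependent (fun i => f (b i))
    have : a = f := b.ext hab
    rwa [← this]

end burnside

open Module Polynomial

lemma charpoly_restrict_dvd {𝕜 V : Type*} [Field 𝕜] [AddCommGroup V] [Module 𝕜 V]
    [FiniteDimensional 𝕜 V] (f : Module.End 𝕜 V) (W : Submodule 𝕜 V)
    (h : ∀ x ∈ W, f x ∈ W) :
    (f.restrict h).charpoly ∣ f.charpoly := by
  obtain ⟨W', hc⟩ := Submodule.exists_isCompl W
  let e := Submodule.prodEquivOfIsCompl W W' hc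
  let b₁ := finBasis 𝕜 W
  let b₂ := finBasis 𝕜 W'
  let bp := b₁.prod b₂
  let bV := bp.map e
  have hrepl : ∀ (y : W) (i), bV.repr (y : V) (Sum.inl i) = b₁.repr y i := by
    intro y i
    have h0 : bV.repr (y : V) = bp.repr (e.symm (y : V)) := by
      simp [bV, Basis.map_repr]
    have h2 : e.symm (y : V) = (y, 0) :=
      Submodule.prodEquivOfIsCompl_symm_apply_left W W' hc y
    rw [h0, h2, Basis.prod_repr_inl]
  have hrepr : ∀ (y : W) (i), bV.repr (y : V) (Sum.inr i) = 0 := by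
    intro y i
    have h0 : bV.repr (y : V) = bp.repr (e.symm (y : V)) := by
      simp [bV, Basis.map_repr]
    have h2 : e.symm (y : V) = (y, 0) :=
      Submodule.prodEquivOfIsCompl_symm_apply_left W W' hc y
    rw [h0, h2, Basis.prod_repr_inr]
    simp
  have h1 : ∀ j, bV (Sum.inl j) = (b₁ j : V) := by
    intro j
    simp [bV, bp, Basis.map_apply, e, Submodule.coe_prodEquivOfIsCompl',
      Basis.prod_apply_inl_fst, Basis.prod_apply_inl_snd]
  let M := LinearMap.toMatrix bV bV f
  have e11 : M.toBlocks₁₁ = LinearMap.toMatrix b₁ b₁ (f.restrict h) := by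
    ext i j
    simp only [Matrix.toBlocks₁₁, Matrix.of_apply, M, LinearMap.toMatrix_apply]
    rw [h1 j]
    exact hrepl ⟨f (b₁ j : V), h _ (b₁ j).2⟩ i
  have e21 : M.toBlocks₂₁ = 0 := by
    ext i j
    simp only [Matrix.toBlocks₂₁, Matrix.of_apply, M, LinearMap.toMatrix_apply,
      Matrix.zero_apply]
    rw [h1 j]
    exact hrepr ⟨f (b₁ j : V), h _ (b₁ j).2⟩ i
  have h3 : f.charpoly = M.charpoly := (LinearMap.charpoly_toMatrix f bV).symm
  rw [h3, ← Matrix.fromBlocks_toBlocks M, e11, e21, Matrix.charpoly_fromBlocks_zero₂₁,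
    ← LinearMap.charpoly_toMatrix (f.restrict h) b₁]
  exact Dvd.intro _ rfl

lemma end_charpoly_toLinAlgEquiv' {n : ℕ} (M : Matrix (Fin n) (Fin n) ℂ) :
    (Matrix.toLinAlgEquiv' M : Module.End ℂ (Fin n → ℂ)).charpoly = M.charpoly := by
  have h1 : (Matrix.toLinAlgEquiv' M : Module.End ℂ (Fin n → ℂ)) = Matrix.toLin' M :=
    LinearMap.ext fun v => by rw [Matrix.toLinAlgEquiv'_apply, Matrix.toLin'_apply]
  rw [h1, ← LinearMap.charpoly_toMatrix (Matrix.toLin' M) (Pi.basisFun ℂ (Fin n)),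
    LinearMap.toMatrix_eq_toMatrix', LinearMap.toMatrix'_toLin']

/-- If the commutator `C = BDB⁻¹D⁻¹` of `B, D ∈ GL(n, ℂ)` has property P (no product of a
nonempty proper sub-multiset of the eigenvalues of `C` equals `1`), then the subalgebra of
`Matₙ(ℂ)` generated by `B, D, B⁻¹, D⁻¹` is all of `Matₙ(ℂ)`. -/
theorem stmt_12 (n : ℕ) (B D : Matrix (Fin n) (Fin n) ℂ) (hB : IsUnit B) (hD : IsUnit D)
    (hP : ∀ S : Multiset ℂ,
      S ≤ (B * D * B⁻¹ * D⁻¹).charpoly.roots → S ≠ 0 →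
      S ≠ (B * D * B⁻¹ * D⁻¹).charpoly.roots → S.prod ≠ 1) :
    Algebra.adjoin ℂ ({B, D, B⁻¹, D⁻¹} : Set (Matrix (Fin n) (Fin n) ℂ)) = ⊤ := by
  classical
  set s : Set (Matrix (Fin n) (Fin n) ℂ) := {B, D, B⁻¹, D⁻¹} with hs
  let e : Matrix (Fin n) (Fin n) ℂ ≃ₐ[ℂ] Module.End ℂ (Fin n → ℂ) := Matrix.toLinAlgEquiv'
  -- the irreducibility hypothesis on the End side
  have hirr : ∀ W : Submodule ℂ (Fin n → ℂ),
      (∀ f ∈ Algebra.adjoin ℂ (e '' s), ∀ x ∈ W, f x ∈ W) → W = ⊥ ∨ W = ⊤ := by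
    intro W hWinv
    by_contra hcon
    push_neg at hcon
    obtain ⟨hWbot, hWtop⟩ := hcon
    have hmem : ∀ M ∈ s, ∀ x ∈ W, e M x ∈ W := fun M hM =>
      hWinv (e M) (Algebra.subset_adjoin ⟨M, hM, rfl⟩)
    have hBW : ∀ x ∈ W, e B x ∈ W := hmem B (by simp [hs])
    have hDW : ∀ x ∈ W, e D x ∈ W := hmem D (by simp [hs])
    have hB'W : ∀ x ∈ W, e B⁻¹ x ∈ W := hmem B⁻¹ (by simp [hs])
    have hD'W : ∀ x ∈ W, e D⁻¹ x ∈ W := hmem D⁻¹ (by simp [hs])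
    set C : Matrix (Fin n) (Fin n) ℂ := B * D * B⁻¹ * D⁻¹ with hC
    have hCW : ∀ x ∈ W, e C x ∈ W := by
      intro x hx
      rw [hC, map_mul, map_mul, map_mul]
      exact hBW _ (hDW _ (hB'W _ (hD'W _ hx)))
    set g := (e C).restrict hCW with hg
    set S := g.charpoly.roots with hSdef
    -- S is a sub-multiset of roots of charpoly C
    have hdvd : g.charpoly ∣ (e C).charpoly := charpoly_restrict_dvd (e C) W hCW
    rw [end_charpoly_toLinAlgEquiv'] at hdvd
    have hS1 : S ≤ C.charpoly.roots :=
      Polynomial.roots.le_of_dvd (C.charpoly_monic.ne_zero) hdvd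
    -- cardinalities
    have hcardS : Multiset.card S = finrank ℂ W := by
      rw [hSdef, Polynomial.splits_iff_card_roots.mp (IsAlgClosed.splits g.charpoly),
        LinearMap.charpoly_natDegree]
    have hcardC : Multiset.card C.charpoly.roots = n := by
      rw [Polynomial.splits_iff_card_roots.mp (IsAlgClosed.splits C.charpoly)]
      simp [Matrix.charpoly_natDegree_eq_dim]
    have hS2 : S ≠ 0 := by
      intro h0
      apply hWbot
      rw [← Submodule.finrank_eq_zero (R := ℂ) (M := Fin n → ℂ)]
      rw [← hcardS, h0, Multiset.card_zero]
    have hS3 : S ≠ C.charpoly.roots := by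
      intro heq
      have h1 : finrank ℂ W < n := by
        have := Submodule.finrank_lt (K := ℂ) (V := Fin n → ℂ) hWtop
        simpa [Module.finrank_fin_fun] using this
      rw [← hcardS, heq, hcardC] at h1
      exact lt_irrefl _ h1
    -- product of S is 1
    set rB := (e B).restrict hBW
    set rD := (e D).restrict hDW
    set rB' := (e B⁻¹).restrict hB'W
    set rD' := (e D⁻¹).restrict hD'W
    have hgdecomp : g = rB * rD * rB' * rD' := by
      apply LinearMap.ext
      intro x
      apply Subtype.ext
      simp only [hg, LinearMap.restrict_apply, hC, map_mul, Module.End.mul_apply, rB, rD, rB', rD']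
    have hBB' : rB * rB' = 1 := by
      apply LinearMap.ext
      intro x
      apply Subtype.ext
      simp only [Module.End.mul_apply, LinearMap.restrict_apply, rB, rB', Module.End.one_apply]
      have h1 : e B (e B⁻¹ (x : Fin n → ℂ)) = (e B * e B⁻¹) (x : Fin n → ℂ) := rfl
      rw [h1, ← map_mul, Matrix.mul_nonsing_inv B ((Matrix.isUnit_iff_isUnit_det B).mp hB),
        map_one, Module.End.one_apply]
    have hDD' : rD * rD' = 1 := by
      apply LinearMap.ext
      intro x
      apply Subtype.ext
      simp only [Module.End.mul_apply, LinearMap.restrict_apply, rD, rD', Module.End.one_apply]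
      have h1 : e D (e D⁻¹ (x : Fin n → ℂ)) = (e D * e D⁻¹) (x : Fin n → ℂ) := rfl
      rw [h1, ← map_mul, Matrix.mul_nonsing_inv D ((Matrix.isUnit_iff_isUnit_det D).mp hD),
        map_one, Module.End.one_apply]
    have hdetg : LinearMap.det g = 1 := by
      have h1 : LinearMap.det rB * LinearMap.det rB' = 1 := by
        rw [← map_mul LinearMap.det rB rB', hBB', map_one]
      have h2 : LinearMap.det rD * LinearMap.det rD' = 1 := by
        rw [← map_mul LinearMap.det rD rD', hDD', map_one]
      rw [hgdecomp, map_mul LinearMap.det, map_mul LinearMap.det, map_mul LinearMap.det]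
      calc LinearMap.det rB * LinearMap.det rD * LinearMap.det rB' * LinearMap.det rD'
          = (LinearMap.det rB * LinearMap.det rB') * (LinearMap.det rD * LinearMap.det rD') := by
            ring
        _ = 1 := by rw [h1, h2, mul_one]
    have hprod : S.prod = 1 := by
      have h1 : S.prod = (LinearMap.toMatrix (finBasis ℂ W) (finBasis ℂ W) g).charpoly.roots.prod := by
        rw [hSdef, LinearMap.charpoly_toMatrix]
      rw [h1, ← Matrix.det_eq_prod_roots_charpoly, LinearMap.det_toMatrix, hdetg]
    exact hP S hS1 hS2 hS3 hprod
  have htop : Algebra.adjoin ℂ ((e : Matrix (Fin n) (Fin n) ℂ → Module.End ℂ (Fin n → ℂ)) '' s)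
      = ⊤ := burnside _ hirr
  apply Subalgebra.map_injective (f := e.toAlgHom) e.injective
  rw [AlgHom.map_adjoin]
  have h2 : (e.toAlgHom : Matrix (Fin n) (Fin n) ℂ → Module.End ℂ (Fin n → ℂ)) '' s
      = (e : Matrix (Fin n) (Fin n) ℂ → Module.End ℂ (Fin n → ℂ)) '' s := rfl
  rw [h2, htop, Algebra.map_top]
  symm
  ext f
  simp only [AlgHom.mem_range, Algebra.mem_top, iff_true]
  exact ⟨e.symm f, e.apply_symm_apply f⟩
end

section
/- Let V be a finite-dimensional complex vector space with a nondegenerate symmetric or alternating bilinear form ⟨,⟩, and let K be an isometry of the form with K² ≠ Id whose only eigenvalues are ±1. Then there exist μ ∈ {1, −1} and a nonzero subspace U = ker(K − μ·Id) ∩ range(K⁻¹ − μ·Id) such that U is totally isotropic, and U is invariant under every isometry B commuting with K. -/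
open Module LinearMap

lemma key_aux (V : Type*) [AddCommGroup V] [Module ℂ V] [FiniteDimensional ℂ V]
    (K : V ≃ₗ[ℂ] V) (hK2 : K * K ≠ 1)
    (heig : ∀ μ : ℂ, Module.End.HasEigenvalue (K : V →ₗ[ℂ] V) μ → μ = 1 ∨ μ = -1) :
    ∃ μ : ℂ, (μ = 1 ∨ μ = -1) ∧
      LinearMap.ker ((K : V →ₗ[ℂ] V) - μ • 1) ⊓
        LinearMap.range ((K : V →ₗ[ℂ] V) - μ • 1) ≠ ⊥ := by
  by_contra h
  push_neg at h
  set f : Module.End ℂ V := (K : V →ₗ[ℂ] V) with hf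
  -- for each μ ∈ {1, -1}, ker((f - μ)^k) = ker (f - μ) for all k ≥ 1
  have hker : ∀ μ : ℂ, (μ = 1 ∨ μ = -1) → ∀ k : ℕ,
      LinearMap.ker ((f - μ • 1) ^ k) ≤ LinearMap.ker (f - μ • 1) := by
    intro μ hμ k
    induction k with
    | zero =>
      intro v hv
      simp only [pow_zero, LinearMap.mem_ker, Module.End.one_apply] at hv
      simp [hv]
    | succ n ih =>
      intro v hv
      simp only [LinearMap.mem_ker, pow_succ, Module.End.mul_apply] at hv
      have h1 : (f - μ • 1) v ∈ LinearMap.ker ((f - μ • 1) ^ n) := hv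
      have h2 : (f - μ • 1) v ∈ LinearMap.ker (f - μ • 1) ⊓
          LinearMap.range (f - μ • 1) := ⟨ih h1, ⟨v, rfl⟩⟩
      rw [h μ hμ] at h2
      exact h2
  -- hence maxGenEigenspace = eigenspace for μ = ±1
  have hmax : ∀ μ : ℂ, (μ = 1 ∨ μ = -1) →
      Module.End.maxGenEigenspace f μ ≤ LinearMap.ker (f - μ • 1) := by
    intro μ hμ v hv
    rw [Module.End.mem_maxGenEigenspace] at hv
    obtain ⟨k, hk⟩ := hv
    exact hker μ hμ k hk
  -- other μ: maxGenEigenspace = ⊥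
  have hbot : ∀ μ : ℂ, ¬ (μ = 1 ∨ μ = -1) → Module.End.maxGenEigenspace f μ = ⊥ := by
    intro μ hμ
    by_contra hb
    apply hμ
    apply heig
    rw [Module.End.maxGenEigenspace_eq_genEigenspace_finrank] at hb
    exact Module.End.hasEigenvalue_of_hasGenEigenvalue (k := Module.finrank ℂ V) hb
  have htop := Module.End.iSup_maxGenEigenspace_eq_top f
  have hle : (⊤ : Submodule ℂ V) ≤ LinearMap.ker (f - (1:ℂ) • 1) ⊔
      LinearMap.ker (f - (-1:ℂ) • 1) := by
    rw [← htop]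
    apply iSup_le
    intro μ
    by_cases hμ : μ = 1 ∨ μ = -1
    · rcases hμ with rfl | rfl
      · exact le_trans (hmax 1 (Or.inl rfl)) le_sup_left
      · exact le_trans (hmax (-1) (Or.inr rfl)) le_sup_right
    · rw [hbot μ hμ]; exact bot_le
  apply hK2
  have hzero : ∀ v : V, f (f v) = v := by
    intro v
    have hv : v ∈ LinearMap.ker (f - (1:ℂ) • 1) ⊔ LinearMap.ker (f - (-1:ℂ) • 1) :=
      hle trivial
    rw [Submodule.mem_sup] at hv
    obtain ⟨a, ha, b, hb, rfl⟩ := hv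
    simp only [LinearMap.mem_ker, LinearMap.sub_apply, LinearMap.smul_apply,
      Module.End.one_apply, sub_eq_zero] at ha hb
    rw [map_add, ha, hb, map_add, map_smul, map_smul, ha, hb]
    simp
  ext v
  exact hzero v

/-- Let `V` be a finite-dimensional complex vector space with a nondegenerate symmetric or
alternating bilinear form, and `K` an isometry with `K² ≠ Id` whose only eigenvalues are `±1`.
Then for some `μ ∈ {1, −1}` the subspace `U = ker(K − μ) ⊓ range(K⁻¹ − μ)` is nonzero,
totally isotropic, and invariant under every isometry commuting with `K`. -/
theorem stmt_15 (V : Type*) [AddCommGroup V] [Module ℂ V] [FiniteDimensional ℂ V]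
    (Φ : LinearMap.BilinForm ℂ V) (hnd : Φ.Nondegenerate) (hsa : Φ.IsSymm ∨ Φ.IsAlt)
    (K : V ≃ₗ[ℂ] V) (hKiso : ∀ x y : V, Φ (K x) (K y) = Φ x y)
    (hK2 : K * K ≠ 1)
    (heig : ∀ μ : ℂ, Module.End.HasEigenvalue (K : V →ₗ[ℂ] V) μ → μ = 1 ∨ μ = -1) :
    ∃ μ : ℂ, (μ = 1 ∨ μ = -1) ∧
      LinearMap.ker ((K : V →ₗ[ℂ] V) - μ • LinearMap.id) ⊓
          LinearMap.range (((K⁻¹ : V ≃ₗ[ℂ] V) : V →ₗ[ℂ] V) - μ • (LinearMap.id : V →ₗ[ℂ] V)) ≠ ⊥ ∧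
      (∀ u ∈ LinearMap.ker ((K : V →ₗ[ℂ] V) - μ • LinearMap.id) ⊓
          LinearMap.range (((K⁻¹ : V ≃ₗ[ℂ] V) : V →ₗ[ℂ] V) - μ • (LinearMap.id : V →ₗ[ℂ] V)),
        ∀ u' ∈ LinearMap.ker ((K : V →ₗ[ℂ] V) - μ • LinearMap.id) ⊓
          LinearMap.range (((K⁻¹ : V ≃ₗ[ℂ] V) : V →ₗ[ℂ] V) - μ • (LinearMap.id : V →ₗ[ℂ] V)),
        Φ u u' = 0) ∧
      ∀ B : V ≃ₗ[ℂ] V, (∀ x y : V, Φ (B x) (B y) = Φ x y) → B * K = K * B →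
        ∀ u ∈ LinearMap.ker ((K : V →ₗ[ℂ] V) - μ • LinearMap.id) ⊓
          LinearMap.range (((K⁻¹ : V ≃ₗ[ℂ] V) : V →ₗ[ℂ] V) - μ • (LinearMap.id : V →ₗ[ℂ] V)),
          B u ∈ LinearMap.ker ((K : V →ₗ[ℂ] V) - μ • LinearMap.id) ⊓
            LinearMap.range (((K⁻¹ : V ≃ₗ[ℂ] V) : V →ₗ[ℂ] V) - μ • (LinearMap.id : V →ₗ[ℂ] V)) := by
  obtain ⟨μ, hμ, hne⟩ := key_aux V K hK2 heig
  have hμ2 : μ * μ = 1 := by rcases hμ with rfl | rfl <;> ring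
  have hμ0 : μ ≠ 0 := by rcases hμ with rfl | rfl <;> norm_num
  -- notation
  set f : Module.End ℂ V := (K : V →ₗ[ℂ] V) with hf
  set g : V →ₗ[ℂ] V := ((K⁻¹ : V ≃ₗ[ℂ] V) : V →ₗ[ℂ] V) - μ • LinearMap.id with hg
  have hKinv : ∀ x : V, (K⁻¹ : V ≃ₗ[ℂ] V) x = K.symm x := fun x => rfl
  -- membership characterizations
  have hkermem : ∀ v : V, v ∈ LinearMap.ker (f - μ • LinearMap.id) ↔ K v = μ • v := by
    intro v
    simp [LinearMap.mem_ker, sub_eq_zero, hf]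
  have hrangemem : ∀ v : V, v ∈ LinearMap.range g ↔ ∃ x : V, K.symm x - μ • x = v := by
    intro v
    constructor
    · rintro ⟨x, rfl⟩; exact ⟨x, rfl⟩
    · rintro ⟨x, rfl⟩; exact ⟨x, rfl⟩
  refine ⟨μ, hμ, ?_, ?_, ?_⟩
  · -- nonemptiness
    obtain ⟨v, hv, hv0⟩ := Submodule.exists_mem_ne_zero_of_ne_bot hne
    obtain ⟨hvker, w, hw⟩ := hv
    have hKv : K v = μ • v := (hkermem v).1 hvker
    have hw' : K w - μ • w = v := by
      simpa [sub_eq_iff_eq_add, LinearMap.sub_apply, hf] using hw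
    have h0 : v = μ • K.symm v := by
      have := congrArg K.symm hKv
      rwa [K.symm_apply_apply, map_smul] at this
    have hsymm : K.symm v = μ • v := by
      have h1 : μ • v = μ • (μ • K.symm v) := by rw [← h0]
      rw [smul_smul, hμ2, one_smul] at h1
      exact h1.symm
    have hKw : K.symm v = w - μ • K.symm w := by
      rw [← hw', map_sub, map_smul, K.symm_apply_apply]
    refine Submodule.ne_bot_iff _ |>.2 ⟨μ • v, ⟨?_, ?_⟩, ?_⟩
    · simp only [SetLike.mem_coe]
      rw [hkermem, map_smul, hKv]
    · simp only [SetLike.mem_coe]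
      rw [hrangemem]
      refine ⟨(-μ) • w, ?_⟩
      have h1 : μ • ((-μ:ℂ) • w) = -w := by
        rw [smul_smul, mul_neg, hμ2, neg_smul, one_smul]
      rw [map_smul, h1, sub_neg_eq_add, neg_smul, ← hsymm, hKw]
      abel
    · simpa [smul_eq_zero, hμ0] using hv0
  · -- isotropy
    rintro u ⟨huk, hur⟩ u' ⟨hu'k, hu'r⟩
    obtain ⟨x, hx⟩ := (hrangemem u').1 hu'r
    have hKu : K u = μ • u := (hkermem u).1 huk
    have h1 : Φ u (K.symm x) = Φ (K u) x := by
      conv_rhs => rw [show x = K (K.symm x) by rw [K.apply_symm_apply]]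
      rw [hKiso]
    calc Φ u u' = Φ u (K.symm x - μ • x) := by rw [hx]
      _ = Φ u (K.symm x) - μ * Φ u x := by simp [mul_comm]
      _ = Φ (K u) x - μ * Φ u x := by rw [h1]
      _ = 0 := by rw [hKu]; simp [mul_comm]
  · -- invariance
    rintro B hBiso hBK u ⟨huk, hur⟩
    have hcomm : ∀ x : V, B (K x) = K (B x) := by
      intro x
      have := congrArg (fun e : V ≃ₗ[ℂ] V => e x) hBK
      simpa using this
    have hcomm' : ∀ x : V, B (K.symm x) = K.symm (B x) := by
      intro x
      have := hcomm (K.symm x)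
      rw [K.apply_symm_apply] at this
      rw [this, K.symm_apply_apply]
    have hKu : K u = μ • u := (hkermem u).1 huk
    obtain ⟨x, hx⟩ := (hrangemem u).1 hur
    constructor
    · simp only [SetLike.mem_coe]
      rw [hkermem, ← hcomm, hKu, map_smul]
    · simp only [SetLike.mem_coe]
      rw [hrangemem]
      exact ⟨B x, by rw [← hcomm', ← map_smul, ← map_sub, hx]⟩
end

section
/- Let G be one of Sp(2n, ℂ) or O(m, ℂ) (isometry group of a nondegenerate form ⟨,⟩ on V = ℂ^m), and let B, D ∈ G be such that for every nonzero totally isotropic subspace W invariant under both B and D, det([B,D]|_W) ≠ 1, and additionally the commutator [B,D] restricted to any nonzero proper B,D-invariant subspace has determinant ≠ 1 when that subspace is isotropic. Then every K ∈ G commuting with both B and D satisfies K² = Id. -/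
section Aux

variable {V : Type*} [AddCommGroup V] [Module ℂ V] [FiniteDimensional ℂ V]

lemma aux_inv_mem (B : V ≃ₗ[ℂ] V) (W : Submodule ℂ V) (hB : ∀ x ∈ W, B x ∈ W) :
    ∀ x ∈ W, B⁻¹ x ∈ W := by
  have hmap : W.map (B : V →ₗ[ℂ] V) = W := by
    apply Submodule.eq_of_le_of_finrank_le
    · rintro y ⟨x, hx, rfl⟩; exact hB x hx
    · rw [LinearEquiv.finrank_map_eq B W]
  intro x hx
  rw [← hmap] at hx
  obtain ⟨y, hy, hyx⟩ := hx
  have : B⁻¹ x = y := by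
    subst hyx
    exact B.symm_apply_apply y
  rwa [this]

lemma aux_comm_mem (B D : V ≃ₗ[ℂ] V) (W : Submodule ℂ V)
    (hB : ∀ x ∈ W, B x ∈ W) (hD : ∀ x ∈ W, D x ∈ W) :
    ∀ x ∈ W, ((B * D * B⁻¹ * D⁻¹ : V ≃ₗ[ℂ] V) : V →ₗ[ℂ] V) x ∈ W := by
  intro x hx
  have hB' := aux_inv_mem B W hB
  have hD' := aux_inv_mem D W hD
  have : ((B * D * B⁻¹ * D⁻¹ : V ≃ₗ[ℂ] V) : V →ₗ[ℂ] V) x = B (D (B⁻¹ (D⁻¹ x))) := rfl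
  rw [this]
  exact hB _ (hD _ (hB' _ (hD' _ hx)))

lemma aux_comm_det (B D : V ≃ₗ[ℂ] V) (W : Submodule ℂ V)
    (hB : ∀ x ∈ W, B x ∈ W) (hD : ∀ x ∈ W, D x ∈ W)
    (hC : ∀ x ∈ W, ((B * D * B⁻¹ * D⁻¹ : V ≃ₗ[ℂ] V) : V →ₗ[ℂ] V) x ∈ W) :
    LinearMap.det (((B * D * B⁻¹ * D⁻¹ : V ≃ₗ[ℂ] V) : V →ₗ[ℂ] V).restrict hC) = 1 := by
  have hB' := aux_inv_mem B W hB
  have hD' := aux_inv_mem D W hD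
  set b : W →ₗ[ℂ] W := (B : V →ₗ[ℂ] V).restrict hB with hbdef
  set d : W →ₗ[ℂ] W := (D : V →ₗ[ℂ] V).restrict hD with hddef
  set b' : W →ₗ[ℂ] W := ((B⁻¹ : V ≃ₗ[ℂ] V) : V →ₗ[ℂ] V).restrict hB' with hb'def
  set d' : W →ₗ[ℂ] W := ((D⁻¹ : V ≃ₗ[ℂ] V) : V →ₗ[ℂ] V).restrict hD' with hd'def
  have hdecomp : (((B * D * B⁻¹ * D⁻¹ : V ≃ₗ[ℂ] V) : V →ₗ[ℂ] V)).restrict hC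
      = b ∘ₗ (d ∘ₗ (b' ∘ₗ d')) := by
    ext x
    simp only [hbdef, hddef, hb'def, hd'def, LinearMap.coe_comp, Function.comp_apply,
      LinearMap.restrict_apply]
    rfl
  have hbb : LinearMap.det b * LinearMap.det b' = 1 := by
    rw [← LinearMap.det_comp]
    have : b ∘ₗ b' = LinearMap.id := by
      ext x
      simp only [hbdef, hb'def, LinearMap.coe_comp, Function.comp_apply,
        LinearMap.restrict_apply, LinearMap.id_coe, id_eq]
      exact B.apply_symm_apply (x : V)
    rw [this]
    exact LinearMap.det_id
  have hdd : LinearMap.det d * LinearMap.det d' = 1 := by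
    rw [← LinearMap.det_comp]
    have : d ∘ₗ d' = LinearMap.id := by
      ext x
      simp only [hddef, hd'def, LinearMap.coe_comp, Function.comp_apply,
        LinearMap.restrict_apply, LinearMap.id_coe, id_eq]
      exact D.apply_symm_apply (x : V)
    rw [this]
    exact LinearMap.det_id
  rw [hdecomp, LinearMap.det_comp, LinearMap.det_comp, LinearMap.det_comp]
  calc LinearMap.det b * (LinearMap.det d * (LinearMap.det b' * LinearMap.det d'))
      = (LinearMap.det b * LinearMap.det b') * (LinearMap.det d * LinearMap.det d') := by ring
    _ = 1 := by rw [hbb, hdd, one_mul]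

end Aux

/-- Let `B, D` be isometries of a nondegenerate symmetric (orthogonal case) or alternating
(symplectic case) bilinear form on a finite-dimensional complex vector space, such that the
commutator `[B,D] = BDB⁻¹D⁻¹` has determinant `≠ 1` on every nonzero totally isotropic
subspace invariant under both `B` and `D`. Then every isometry `K` commuting with both `B`
and `D` satisfies `K² = Id`. -/
theorem stmt_17 (V : Type*) [AddCommGroup V] [Module ℂ V] [FiniteDimensional ℂ V]
    (Φ : LinearMap.BilinForm ℂ V) (hnd : Φ.Nondegenerate) (hsa : Φ.IsSymm ∨ Φ.IsAlt)
    (B D : V ≃ₗ[ℂ] V)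
    (hBiso : ∀ x y : V, Φ (B x) (B y) = Φ x y)
    (hDiso : ∀ x y : V, Φ (D x) (D y) = Φ x y)
    (hP : ∀ W : Submodule ℂ V, W ≠ ⊥ →
      (∀ u ∈ W, ∀ u' ∈ W, Φ u u' = 0) →
      (∀ x ∈ W, B x ∈ W) → (∀ x ∈ W, D x ∈ W) →
      ∀ hC : ∀ x ∈ W, ((B * D * B⁻¹ * D⁻¹ : V ≃ₗ[ℂ] V) : V →ₗ[ℂ] V) x ∈ W,
        LinearMap.det (((B * D * B⁻¹ * D⁻¹ : V ≃ₗ[ℂ] V) : V →ₗ[ℂ] V).restrict hC) ≠ 1)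
    (K : V ≃ₗ[ℂ] V) (hKiso : ∀ x y : V, Φ (K x) (K y) = Φ x y)
    (hKB : K * B = B * K) (hKD : K * D = D * K) :
    K * K = 1 := by
  by_contra hK2
  -- the operator g = K - K⁻¹
  set g : V →ₗ[ℂ] V := (K : V →ₗ[ℂ] V) - ((K⁻¹ : V ≃ₗ[ℂ] V) : V →ₗ[ℂ] V) with hgdef
  have hgapply : ∀ x : V, g x = K x - K⁻¹ x := fun x => rfl
  have hg0 : g ≠ 0 := by
    intro h
    apply hK2
    ext x
    have : g x = 0 := by rw [h]; rfl
    rw [hgapply] at this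
    have hx : K x = K⁻¹ x := by linear_combination (norm := abel) this
    show K (K x) = x
    rw [hx]
    exact K.apply_symm_apply x
  -- pointwise commutation facts
  have hcommK : ∀ (A : V ≃ₗ[ℂ] V), K * A = A * K → ∀ x, A (K x) = K (A x) := by
    intro A hA x
    exact (DFunLike.congr_fun hA x).symm
  have hcommKinv : ∀ (A : V ≃ₗ[ℂ] V), K * A = A * K → ∀ x, A (K⁻¹ x) = K⁻¹ (A x) := by
    intro A hA x
    have h1 : K⁻¹ * A = A * K⁻¹ := by
      calc K⁻¹ * A = K⁻¹ * (A * K) * K⁻¹ := by group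
        _ = K⁻¹ * (K * A) * K⁻¹ := by rw [hA]
        _ = A * K⁻¹ := by group
    exact (DFunLike.congr_fun h1 x).symm
  have hcommg : ∀ (A : V ≃ₗ[ℂ] V), K * A = A * K → ∀ x, g (A x) = A (g x) := by
    intro A hA x
    rw [hgapply, hgapply, ← hcommK A hA, ← hcommKinv A hA, map_sub]
  -- g is skew-adjoint w.r.t. Φ
  have hskew : ∀ x y : V, Φ (g x) y = - Φ x (g y) := by
    intro x y
    have h1 : Φ (K x) y = Φ x (K⁻¹ y) := by
      conv_lhs => rw [show y = K (K⁻¹ y) from (K.apply_symm_apply y).symm]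
      exact hKiso x (K⁻¹ y)
    have h2 : Φ (K⁻¹ x) y = Φ x (K y) := by
      conv_rhs => rw [show x = K (K⁻¹ x) from (K.apply_symm_apply x).symm]
      exact (hKiso (K⁻¹ x) y).symm
    rw [hgapply, hgapply]
    rw [map_sub, LinearMap.sub_apply, h1, h2, map_sub]
    ring
  -- K commutes with g
  have hKg : ∀ x, g (K x) = K (g x) := hcommg K rfl
  by_cases hW : (LinearMap.ker g ⊓ LinearMap.range g : Submodule ℂ V) = ⊥
  · -- Case B : ker g ∩ range g = ⊥ ; find eigenvalue of K on range g with μ² ≠ 1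
    set S : Submodule ℂ V := LinearMap.range g with hSdef
    have hSne : S ≠ ⊥ := by
      intro h
      exact hg0 (LinearMap.range_eq_bot.mp h)
    haveI : Nontrivial S := Submodule.nontrivial_iff_ne_bot.mpr hSne
    have hKS : ∀ x ∈ S, K x ∈ S := by
      rintro x ⟨y, rfl⟩
      exact ⟨K y, (hKg y).symm ▸ rfl⟩
    set K' : Module.End ℂ S := (K : V →ₗ[ℂ] V).restrict hKS with hK'def
    obtain ⟨μ, hμ⟩ := Module.End.exists_eigenvalue K'
    obtain ⟨v, hv⟩ := hμ.exists_hasEigenvector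
    set x : V := (v : V) with hxdef
    have hxS : x ∈ S := v.2
    have hx0 : x ≠ 0 := fun h => hv.2 (Subtype.ext h)
    have hKx : K x = μ • x := congrArg Subtype.val hv.apply_eq_smul
    have hμ0 : μ ≠ 0 := by
      intro h
      apply hx0
      have : K x = 0 := by rw [hKx, h, zero_smul]
      have := congrArg (fun z => K⁻¹ z) this
      simpa using this
    have hKinvx : K⁻¹ x = μ⁻¹ • x := by
      have h1 : x = μ • K⁻¹ x := by
        calc x = K⁻¹ (K x) := (K.symm_apply_apply x).symm
          _ = K⁻¹ (μ • x) := by rw [hKx]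
          _ = μ • K⁻¹ x := map_smul _ _ _
      have := congrArg (fun z => μ⁻¹ • z) h1
      simpa [smul_smul, inv_mul_cancel₀ hμ0] using this.symm
    have hμ2 : μ * μ ≠ 1 := by
      intro h
      have hinv : μ⁻¹ = μ := by field_simp; linear_combination -h
      have hgx : g x = 0 := by
        rw [hgapply, hKx, hKinvx, hinv, sub_self]
      have : x ∈ (LinearMap.ker g ⊓ LinearMap.range g : Submodule ℂ V) :=
        ⟨LinearMap.mem_ker.mpr hgx, hxS⟩
      rw [hW] at this
      exact hx0 this
    -- the eigenspace
    set E : Submodule ℂ V := Module.End.eigenspace ((K : V →ₗ[ℂ] V)) μ with hEdef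
    have hmemE : ∀ y, y ∈ E ↔ K y = μ • y := fun y => Module.End.mem_eigenspace_iff
    have hEne : E ≠ ⊥ := by
      intro h
      exact hx0 (by rw [← Submodule.mem_bot (R := ℂ), ← h]; exact (hmemE x).mpr hKx)
    have hEiso : ∀ u ∈ E, ∀ u' ∈ E, Φ u u' = 0 := by
      intro u hu u' hu'
      have h1 : Φ u u' = Φ (K u) (K u') := (hKiso u u').symm
      rw [(hmemE u).mp hu, (hmemE u').mp hu'] at h1
      simp only [map_smul, LinearMap.smul_apply, smul_eq_mul] at h1
      have : (1 - μ * μ) * Φ u u' = 0 := by linear_combination h1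
      rcases mul_eq_zero.mp this with h | h
      · exact absurd (by linear_combination -h) hμ2
      · exact h
    have hEB : ∀ y ∈ E, B y ∈ E := by
      intro y hy
      rw [hmemE] at hy ⊢
      rw [← hcommK B hKB, hy, map_smul]
    have hED : ∀ y ∈ E, D y ∈ E := by
      intro y hy
      rw [hmemE] at hy ⊢
      rw [← hcommK D hKD, hy, map_smul]
    exact hP E hEne hEiso hEB hED (aux_comm_mem B D E hEB hED)
      (aux_comm_det B D E hEB hED (aux_comm_mem B D E hEB hED))
  · -- Case A : W = ker g ∩ range g ≠ ⊥
    set W : Submodule ℂ V := LinearMap.ker g ⊓ LinearMap.range g with hWdef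
    have hWiso : ∀ u ∈ W, ∀ u' ∈ W, Φ u u' = 0 := by
      rintro u ⟨-, v, rfl⟩ u' ⟨hu'k, -⟩
      rw [hskew, LinearMap.mem_ker.mp hu'k, map_zero, neg_zero]
    have hInv : ∀ (A : V ≃ₗ[ℂ] V), K * A = A * K → ∀ y ∈ W, A y ∈ W := by
      rintro A hA y ⟨hyk, z, rfl⟩
      refine ⟨LinearMap.mem_ker.mpr ?_, A z, hcommg A hA z⟩
      rw [hcommg A hA, LinearMap.mem_ker.mp hyk, map_zero]
    have hWB : ∀ y ∈ W, B y ∈ W := hInv B hKB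
    have hWD : ∀ y ∈ W, D y ∈ W := hInv D hKD
    exact hP W hW hWiso hWB hWD (aux_comm_mem B D W hWB hWD)
      (aux_comm_det B D W hWB hWD (aux_comm_mem B D W hWB hWD))
end
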